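/- arXiv:0911.2627 — 3 statements merged into one kernel-verified Lean document; each statement's English description precedes it below -/
import Mathlib

section
/- Let f(x,y) ∈ ℝ[x,y] have total degree k ≥ 2 and suppose deg_x(f) ≥ deg_y(f). Suppose there exist pairwise distinct real numbers a_1, …, a_{k²+1}, pairwise distinct real numbers b_1, …, b_{k²+1}, and a one-variable real polynomial Q(t) = q_m t^m + q_{m−1} t^{m−1} + ⋯ + q_0 with q_m ≠ 0 and m ≥ 1, such that f(x, a_i) = Q(x + b_i) as polynomials in x for each i = 1, …, k²+1. Then f(x,y) = Q(g(x,y)) for some polynomial g(x,y) ∈ ℝ[x,y], and deg Q ≥ 2. -/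
open Polynomial

noncomputable def Phi : MvPolynomial (Fin 2) ℝ →+* Polynomial (Polynomial ℝ) :=
  MvPolynomial.eval₂Hom (Polynomial.C.comp Polynomial.C) ![Polynomial.X, Polynomial.C Polynomial.X]

lemma fin2_finsupp_eq (d : Fin 2 →₀ ℕ) :
    d = Finsupp.single 0 (d 0) + Finsupp.single 1 (d 1) := by
  ext i
  fin_cases i <;> simp [Finsupp.single_apply]

lemma Phi_coeff (f : MvPolynomial (Fin 2) ℝ) (s t : ℕ) :
    ((Phi f).coeff s).coeff t
      = MvPolynomial.coeff (Finsupp.single 0 s + Finsupp.single 1 t) f := by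
  induction f using MvPolynomial.induction_on' with
  | monomial d r =>
    rw [Phi, MvPolynomial.eval₂Hom_monomial]
    rw [Finsupp.prod_fintype _ _ (fun i => pow_zero _), Fin.prod_univ_two]
    simp only [Matrix.cons_val_zero, Matrix.cons_val_one, Matrix.head_cons, RingHom.coe_comp,
      Function.comp_apply, ← Polynomial.C_pow]
    rw [show (Polynomial.C (Polynomial.C r)) * (X ^ d 0 * Polynomial.C (X ^ d 1))
        = Polynomial.C (Polynomial.C r * X ^ d 1) * X ^ d 0 by rw [Polynomial.C_mul]; ring]
    rw [Polynomial.coeff_C_mul_X_pow]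
    rw [MvPolynomial.coeff_monomial]
    by_cases h0 : d 0 = s <;> by_cases h1 : d 1 = t
    · rw [if_pos h0.symm, if_pos]
      · simp [h1]
      · rw [fin2_finsupp_eq d, h0, h1]
    · rw [if_pos h0.symm, if_neg]
      · simp only [Polynomial.coeff_C_mul, Polynomial.coeff_X_pow]
        rw [if_neg (fun h => h1 h.symm), mul_zero]
      · intro h; apply h1; rw [h]; simp [Finsupp.single_apply]
    · rw [if_neg (fun h => h0 h.symm), if_neg]
      · simp
      · intro h; apply h0; rw [h]; simp [Finsupp.single_apply]
    · rw [if_neg (fun h => h0 h.symm), if_neg]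
      · simp
      · intro h; apply h0; rw [h]; simp [Finsupp.single_apply]
  | add p q hp hq =>
    simp [map_add, hp, hq, MvPolynomial.coeff_add]

lemma mem_support_deg0 (f : MvPolynomial (Fin 2) ℝ) (d : Fin 2 →₀ ℕ)
    (hd : d ∈ f.support) : d 0 ≤ f.degreeOf 0 :=
  (MvPolynomial.degreeOf_le_iff.mp le_rfl) d hd

lemma mem_support_deg1 (f : MvPolynomial (Fin 2) ℝ) (d : Fin 2 →₀ ℕ)
    (hd : d ∈ f.support) : d 1 ≤ f.degreeOf 1 :=
  (MvPolynomial.degreeOf_le_iff.mp le_rfl) d hd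

lemma Phi_natDegree_le (f : MvPolynomial (Fin 2) ℝ) :
    (Phi f).natDegree ≤ f.degreeOf 0 := by
  rw [Polynomial.natDegree_le_iff_coeff_eq_zero]
  intro s hs
  ext t
  rw [Phi_coeff, Polynomial.coeff_zero]
  by_contra hc
  have := mem_support_deg0 f _ (MvPolynomial.mem_support_iff.mpr hc)
  simp [Finsupp.single_apply] at this
  omega

lemma degreeOf0_le_Phi (f : MvPolynomial (Fin 2) ℝ) :
    f.degreeOf 0 ≤ (Phi f).natDegree := by
  rw [MvPolynomial.degreeOf_le_iff]
  intro d hd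
  have hc : MvPolynomial.coeff d f ≠ 0 := MvPolynomial.mem_support_iff.mp hd
  rw [fin2_finsupp_eq d, ← Phi_coeff] at hc
  exact Polynomial.le_natDegree_of_ne_zero (fun h => hc (by rw [h, Polynomial.coeff_zero]))

lemma Phi_coeff_natDegree_le (f : MvPolynomial (Fin 2) ℝ) (j : ℕ) :
    ((Phi f).coeff j).natDegree ≤ f.degreeOf 1 := by
  rw [Polynomial.natDegree_le_iff_coeff_eq_zero]
  intro t ht
  rw [Phi_coeff]
  by_contra hc
  have := mem_support_deg1 f _ (MvPolynomial.mem_support_iff.mpr hc)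
  simp [Finsupp.single_apply] at this
  omega

lemma Phi_eval (f : MvPolynomial (Fin 2) ℝ) (x y : ℝ) :
    ((Phi f).eval (Polynomial.C x)).eval y = MvPolynomial.eval ![x, y] f := by
  have : ((Polynomial.evalRingHom y).comp
      ((Polynomial.evalRingHom (Polynomial.C x)).comp Phi))
      = (MvPolynomial.eval ![x, y] : MvPolynomial (Fin 2) ℝ →+* ℝ) := by
    apply MvPolynomial.ringHom_ext
    · intro r; simp [Phi]
    · intro i; fin_cases i <;> simp [Phi]
  exact RingHom.congr_fun this f

lemma Phi_map_eval (f : MvPolynomial (Fin 2) ℝ) (c x : ℝ) :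
    ((Phi f).map (Polynomial.evalRingHom c)).eval x = MvPolynomial.eval ![x, c] f := by
  have : ((Polynomial.evalRingHom x).comp
      ((Polynomial.mapRingHom (Polynomial.evalRingHom c)).comp Phi))
      = (MvPolynomial.eval ![x, c] : MvPolynomial (Fin 2) ℝ →+* ℝ) := by
    apply MvPolynomial.ringHom_ext
    · intro r; simp [Phi]
    · intro i; fin_cases i <;> simp [Phi]
  exact RingHom.congr_fun this f

lemma eval_of_natDegree_le_one (p : Polynomial ℝ) (hp : p.natDegree ≤ 1) (b : ℝ) :
    p.eval b = p.coeff 0 + p.coeff 1 * b := by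
  rw [Polynomial.eval_eq_sum_range' (lt_of_le_of_lt hp one_lt_two)]
  rw [show (2:ℕ) = 1 + 1 from rfl, Finset.sum_range_succ, Finset.sum_range_one]
  ring

lemma taylor_coeff_pred (Q : Polynomial ℝ) (b : ℝ) (m : ℕ) (hm : 1 ≤ m)
    (hQ : Q.natDegree = m) :
    ((Polynomial.taylor b Q).coeff (m - 1)) = Q.coeff (m - 1) + (m : ℝ) * Q.coeff m * b := by
  rw [Polynomial.taylor_coeff]
  have h1 : (Polynomial.hasseDeriv (m - 1) Q).natDegree ≤ 1 :=
    le_trans (Polynomial.natDegree_hasseDeriv_le _ _) (by omega)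
  rw [eval_of_natDegree_le_one _ h1, Polynomial.hasseDeriv_coeff, Polynomial.hasseDeriv_coeff]
  rw [zero_add, Nat.choose_self, Nat.cast_one, one_mul,
    show 1 + (m - 1) = m by omega,
    show m.choose (m - 1) = m by
      have := Nat.choose_symm (by omega : 1 ≤ m)
      rw [this, Nat.choose_one_right]]

lemma taylor_coeff_top (Q : Polynomial ℝ) (b : ℝ) (m : ℕ) (hQ : Q.natDegree ≤ m) :
    ((Polynomial.taylor b Q).coeff m) = Q.coeff m := by
  rw [Polynomial.taylor_coeff]
  have h1 : (Polynomial.hasseDeriv m Q).natDegree ≤ 0 :=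
    le_trans (Polynomial.natDegree_hasseDeriv_le _ _) (by omega)
  rw [Polynomial.eval_eq_sum_range' (lt_of_le_of_lt h1 zero_lt_one)]
  simp [Polynomial.hasseDeriv_coeff]

lemma taylor_coeff_gt (Q : Polynomial ℝ) (b : ℝ) (j : ℕ) (hj : Q.natDegree < j) :
    ((Polynomial.taylor b Q).coeff j) = 0 := by
  rw [Polynomial.taylor_coeff]
  have : Polynomial.hasseDeriv j Q = 0 := by
    ext n
    rw [Polynomial.hasseDeriv_coeff, Polynomial.coeff_zero,
      Polynomial.coeff_eq_zero_of_natDegree_lt (by omega), mul_zero]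
  rw [this, Polynomial.eval_zero]

lemma natDegree_eval_C_le (F : Polynomial (Polynomial ℝ)) (x : ℝ) (N : ℕ)
    (h : ∀ j, (F.coeff j).natDegree ≤ N) :
    (F.eval (Polynomial.C x)).natDegree ≤ N := by
  rw [Polynomial.eval_eq_sum_range]
  refine Polynomial.natDegree_sum_le_of_forall_le _ _ ?_
  intro j _
  refine le_trans (Polynomial.natDegree_mul_le) ?_
  rw [← Polynomial.C_pow, Polynomial.natDegree_C, add_zero]
  exact h j

/-- Theorem 3.1: if `f(x, a_i) = Q(x + b_i)` for `k²+1` pairwise distinct values `a_i`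
and pairwise distinct shifts `b_i`, where `Q` has degree `m ≥ 1`, then
`f(x,y) = Q(g(x,y))` for some two-variable polynomial `g`, and `deg Q ≥ 2`. -/
theorem composite_of_many_shifted_fibers (k m : ℕ) (hk : 2 ≤ k)
    (f : MvPolynomial (Fin 2) ℝ) (hdeg : f.totalDegree = k)
    (hxy : f.degreeOf 1 ≤ f.degreeOf 0)
    (a b : Fin (k ^ 2 + 1) → ℝ)
    (ha : Function.Injective a) (hb : Function.Injective b)
    (Q : Polynomial ℝ) (hQ : Q.natDegree = m) (hm : 1 ≤ m)
    (hfib : ∀ i : Fin (k ^ 2 + 1), ∀ x : ℝ,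
      MvPolynomial.eval ![x, a i] f = Q.eval (x + b i)) :
    (∃ g : MvPolynomial (Fin 2) ℝ, ∀ x y : ℝ,
      MvPolynomial.eval ![x, y] f = Q.eval (MvPolynomial.eval ![x, y] g)) ∧
    2 ≤ Q.natDegree := by
  have hkk : k ≤ k ^ 2 := by nlinarith
  have hcard : Fintype.card (Fin (k ^ 2 + 1)) = k ^ 2 + 1 := Fintype.card_fin _
  set F := Phi f with hF
  -- leading coefficient nonzero
  have hQ0 : Q ≠ 0 := by
    intro h; rw [h, Polynomial.natDegree_zero] at hQ; omega
  have hq : Q.coeff m ≠ 0 := by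
    rw [← hQ]; exact Polynomial.leadingCoeff_ne_zero.mpr hQ0
  -- degree bounds on f
  have hdeg1 : f.degreeOf 1 ≤ k := hdeg ▸ MvPolynomial.degreeOf_le_totalDegree f 1
  have hdeg0 : f.degreeOf 0 ≤ k := hdeg ▸ MvPolynomial.degreeOf_le_totalDegree f 0
  -- Step 1 : the fibers as polynomial identities
  have step1 : ∀ i, F.map (Polynomial.evalRingHom (a i)) = Polynomial.taylor (b i) Q := by
    intro i
    apply Polynomial.funext
    intro x
    rw [Phi_map_eval, hfib i x, Polynomial.taylor_apply, Polynomial.eval_comp,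
      Polynomial.eval_add, Polynomial.eval_X, Polynomial.eval_C]
  -- Step 2 : coefficient m-1
  set c := F.coeff (m - 1) with hc
  have hci : ∀ i, c.eval (a i) = Q.coeff (m - 1) + (m : ℝ) * Q.coeff m * b i := by
    intro i
    have h := congrArg (fun p => Polynomial.coeff p (m - 1)) (step1 i)
    simp only [Polynomial.coeff_map, Polynomial.coe_evalRingHom] at h
    rw [taylor_coeff_pred Q (b i) m hm hQ] at h
    exact h
  -- Step 3 : the shift polynomial B
  have hmq : (m : ℝ) * Q.coeff m ≠ 0 := by
    apply mul_ne_zero _ hq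
    exact Nat.cast_ne_zero.mpr (by omega)
  set B := Polynomial.C (((m : ℝ) * Q.coeff m)⁻¹) * (c - Polynomial.C (Q.coeff (m - 1)))
    with hBdef
  have hBi : ∀ i, B.eval (a i) = b i := by
    intro i
    rw [hBdef]
    simp only [Polynomial.eval_mul, Polynomial.eval_C, Polynomial.eval_sub]
    rw [hci i]
    field_simp
    ring
  have hcdeg : c.natDegree ≤ k := le_trans (Phi_coeff_natDegree_le f (m - 1)) hdeg1
  have hBdeg : B.natDegree ≤ k := by
    refine le_trans (Polynomial.natDegree_C_mul_le _ _) ?_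
    refine le_trans (Polynomial.natDegree_sub_le _ _) ?_
    simp [hcdeg]
  -- Step 4 : m ≤ k
  have hmk : m ≤ k := by
    have h0 : m = (Polynomial.taylor (b 0) Q).natDegree := (Polynomial.natDegree_taylor Q (b 0)).symm ▸ hQ.symm
    rw [h0, ← step1 0]
    exact le_trans Polynomial.natDegree_map_le (le_trans (Phi_natDegree_le f) hdeg0)
  -- Step 5 : main identity
  have hmain : ∀ x y : ℝ, MvPolynomial.eval ![x, y] f = Q.eval (x + B.eval y) := by
    intro x y
    set P := F.eval (Polynomial.C x) with hP
    set Rp := Q.comp (Polynomial.C x + B) with hRp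
    have hsub : P - Rp = 0 := by
      apply Polynomial.eq_zero_of_natDegree_lt_card_of_eval_eq_zero _ ha
      · intro i
        rw [Polynomial.eval_sub, hP, hRp, Phi_eval, hfib i, Polynomial.eval_comp,
          Polynomial.eval_add, Polynomial.eval_C, hBi i, sub_self]
      · rw [hcard]
        have hdsub : (P - Rp).natDegree ≤ k ^ 2 := by
          refine le_trans (Polynomial.natDegree_sub_le _ _) (max_le ?_ ?_)
          · refine le_trans (natDegree_eval_C_le F x (f.degreeOf 1) (Phi_coeff_natDegree_le f)) ?_
            exact le_trans hdeg1 hkk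
          · refine le_trans (Polynomial.natDegree_comp_le) ?_
            have h1 : (Polynomial.C x + B).natDegree ≤ k := by
              refine le_trans (Polynomial.natDegree_add_le _ _) ?_
              simp [hBdeg]
            calc Q.natDegree * (Polynomial.C x + B).natDegree ≤ m * k := by
                  rw [hQ]; exact Nat.mul_le_mul_left m h1
              _ ≤ k * k := Nat.mul_le_mul_right k hmk
              _ = k ^ 2 := (sq k).symm
        omega
    have hPR : P = Rp := sub_eq_zero.mp hsub
    have := congrArg (Polynomial.eval y) hPR
    rw [hP, Phi_eval] at this
    rw [this, hRp, Polynomial.eval_comp, Polynomial.eval_add, Polynomial.eval_C]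
  -- the witness g
  have hex : ∃ g : MvPolynomial (Fin 2) ℝ, ∀ x y : ℝ,
      MvPolynomial.eval ![x, y] f = Q.eval (MvPolynomial.eval ![x, y] g) := by
    refine ⟨MvPolynomial.X 0 + Polynomial.eval₂ MvPolynomial.C (MvPolynomial.X 1) B, ?_⟩
    intro x y
    rw [hmain x y]
    have hid : (MvPolynomial.eval ![x, y] : MvPolynomial (Fin 2) ℝ →+* ℝ).comp
        MvPolynomial.C = RingHom.id ℝ := by
      ext r; simp
    have h2 : MvPolynomial.eval ![x, y] (Polynomial.eval₂ MvPolynomial.C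
        (MvPolynomial.X 1) B) = B.eval y := by
      rw [Polynomial.hom_eval₂, hid, Polynomial.eval₂_eq_eval_map, Polynomial.map_id,
        MvPolynomial.eval_X]
      simp
    rw [map_add, MvPolynomial.eval_X, h2]
    simp
  refine ⟨hex, ?_⟩
  -- Step 7 : deg Q ≥ 2
  rw [hQ]
  by_contra hcon
  have hm1 : m = 1 := by omega
  subst hm1
  -- high coefficients of F vanish
  have hFj : ∀ j, 2 ≤ j → F.coeff j = 0 := by
    intro j hj
    apply Polynomial.eq_zero_of_natDegree_lt_card_of_eval_eq_zero _ ha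
    · intro i
      have h := congrArg (fun p => Polynomial.coeff p j) (step1 i)
      simp only [Polynomial.coeff_map, Polynomial.coe_evalRingHom] at h
      rw [taylor_coeff_gt Q (b i) j (by omega)] at h
      exact h
    · rw [hcard]
      exact lt_of_le_of_lt (le_trans (Phi_coeff_natDegree_le f j) hdeg1) (by omega)
  have hF1 : F.coeff 1 = Polynomial.C (Q.coeff 1) := by
    have h0 : F.coeff 1 - Polynomial.C (Q.coeff 1) = 0 := by
      apply Polynomial.eq_zero_of_natDegree_lt_card_of_eval_eq_zero _ ha
      · intro i
        have h := congrArg (fun p => Polynomial.coeff p 1) (step1 i)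
        simp only [Polynomial.coeff_map, Polynomial.coe_evalRingHom] at h
        rw [taylor_coeff_top Q (b i) 1 (le_of_eq hQ)] at h
        rw [Polynomial.eval_sub, h, Polynomial.eval_C, sub_self]
      · rw [hcard]
        have hd : (F.coeff 1 - Polynomial.C (Q.coeff 1)).natDegree ≤ k := by
          refine le_trans (Polynomial.natDegree_sub_le _ _) (max_le ?_ ?_)
          · exact le_trans (Phi_coeff_natDegree_le f 1) hdeg1
          · simp
        omega
    exact sub_eq_zero.mp h0
  have hF0 : F.coeff 0 = Polynomial.C (Q.coeff 1) * B + Polynomial.C (Q.coeff 0) := by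
    have h0 : F.coeff 0 - (Polynomial.C (Q.coeff 1) * B + Polynomial.C (Q.coeff 0)) = 0 := by
      apply Polynomial.eq_zero_of_natDegree_lt_card_of_eval_eq_zero _ ha
      · intro i
        have h := congrArg (fun p => Polynomial.coeff p 0) (step1 i)
        simp only [Polynomial.coeff_map, Polynomial.coe_evalRingHom] at h
        rw [Polynomial.taylor_coeff_zero, eval_of_natDegree_le_one Q (le_of_eq hQ) (b i)] at h
        rw [Polynomial.eval_sub, Polynomial.eval_add, Polynomial.eval_mul, Polynomial.eval_C,
          Polynomial.eval_C, hBi i, h]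
        ring
      · rw [hcard]
        have hd : (F.coeff 0 - (Polynomial.C (Q.coeff 1) * B
            + Polynomial.C (Q.coeff 0))).natDegree ≤ k := by
          refine le_trans (Polynomial.natDegree_sub_le _ _) (max_le ?_ ?_)
          · exact le_trans (Phi_coeff_natDegree_le f 0) hdeg1
          · refine le_trans (Polynomial.natDegree_add_le _ _) (max_le ?_ ?_)
            · exact le_trans (Polynomial.natDegree_C_mul_le _ _) hBdeg
            · simp
        omega
    exact sub_eq_zero.mp h0
  -- degree of f in x is at most 1
  have hd0 : f.degreeOf 0 ≤ 1 := by
    rw [MvPolynomial.degreeOf_le_iff]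
    intro d hd
    by_contra hc2
    have hcf : MvPolynomial.coeff d f ≠ 0 := MvPolynomial.mem_support_iff.mp hd
    rw [fin2_finsupp_eq d, ← Phi_coeff, ← hF, hFj (d 0) (by omega)] at hcf
    simp at hcf
  -- a top-degree monomial
  have hfne : f ≠ 0 := by
    intro h
    rw [h, MvPolynomial.totalDegree_zero] at hdeg
    omega
  obtain ⟨d, hdsup, hdsum⟩ : ∃ d ∈ f.support, (d.sum fun _ e => e) = k := by
    obtain ⟨d, hd1, hd2⟩ := Finset.exists_mem_eq_sup f.support
      (MvPolynomial.support_nonempty.mpr hfne) (fun d => d.sum fun _ e => e)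
    exact ⟨d, hd1, by rw [← hd2, ← MvPolynomial.totalDegree, hdeg]⟩
  have hdsum' : d 0 + d 1 = k := by
    rw [← hdsum, Finsupp.sum_fintype _ _ (fun i => rfl), Fin.sum_univ_two]
  have hcd : MvPolynomial.coeff d f ≠ 0 := MvPolynomial.mem_support_iff.mp hdsup
  rw [fin2_finsupp_eq d, ← Phi_coeff, ← hF] at hcd
  have hd01 : d 0 ≤ 1 := le_trans (mem_support_deg0 f d hdsup) hd0
  -- B has degree at least k
  have hkB : k ≤ B.natDegree := by
    rcases (by omega : d 0 = 0 ∨ d 0 = 1) with h | h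
    · rw [h, hF0] at hcd
      have h1 : d 1 ≤ (Polynomial.C (Q.coeff 1) * B + Polynomial.C (Q.coeff 0)).natDegree :=
        Polynomial.le_natDegree_of_ne_zero hcd
      have h2 : (Polynomial.C (Q.coeff 1) * B + Polynomial.C (Q.coeff 0)).natDegree
          ≤ B.natDegree := by
        refine le_trans (Polynomial.natDegree_add_le _ _) (max_le ?_ ?_)
        · exact Polynomial.natDegree_C_mul_le _ _
        · simp
      omega
    · rw [h, hF1, Polynomial.coeff_C] at hcd
      have : d 1 = 0 := by
        by_contra hne
        rw [if_neg hne] at hcd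
        exact hcd rfl
      omega
  have hBne : B ≠ 0 := by
    intro h
    rw [h, Polynomial.natDegree_zero] at hkB
    omega
  -- degree of f in y is at least natDegree B
  have hcoef : MvPolynomial.coeff (Finsupp.single 1 B.natDegree) f ≠ 0 := by
    have e1 : (Finsupp.single 1 B.natDegree : Fin 2 →₀ ℕ)
        = Finsupp.single 0 0 + Finsupp.single 1 B.natDegree := by
      rw [Finsupp.single_zero, zero_add]
    rw [e1, ← Phi_coeff, ← hF, hF0, Polynomial.coeff_add, Polynomial.coeff_C_mul,
      Polynomial.coeff_C, if_neg (by omega), add_zero]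
    have hlc : B.coeff B.natDegree ≠ 0 := by
      have := Polynomial.leadingCoeff_ne_zero.mpr hBne
      rwa [Polynomial.leadingCoeff] at this
    exact mul_ne_zero hq hlc
  have hlast : B.natDegree ≤ f.degreeOf 1 := by
    have := mem_support_deg1 f _ (MvPolynomial.mem_support_iff.mpr hcoef)
    simpa using this
  omega
end

section
/- Let f(x,y) ∈ ℝ[x,y] have total degree k ≥ 2 and suppose deg_x(f) ≥ deg_y(f). Suppose there exist pairwise distinct real numbers a_1, …, a_{k²+1}, pairwise distinct real numbers b_1, …, b_{k²+1}, and a one-variable real polynomial Q(t) = q_m t^m + ⋯ + q_0 with q_m ≠ 0 and m ≥ 1, such that f(x, a_i) = Q(x + b_i) as polynomials in x for each i = 1, …, k²+1. Then there exists a one-variable real polynomial p(y) such that f(x,y) = Q(x + p(y)) identically, and deg Q ≥ 2. -/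
open Polynomial MvPolynomial

private lemma eval_aeval_CX' (f : MvPolynomial (Fin 2) ℝ) (x t : ℝ) :
    (MvPolynomial.aeval ![Polynomial.C x, Polynomial.X] f).eval t = MvPolynomial.eval ![x, t] f := by
  induction f using MvPolynomial.induction_on with
  | C a => simp
  | add p q hp hq => simp [hp, hq]
  | mul_X p i hp => fin_cases i <;> simp [hp]

private lemma eval_toUni' (c : MvPolynomial (Fin 1) ℝ) (t : ℝ) :
    (MvPolynomial.aeval ![Polynomial.X] c).eval t = MvPolynomial.eval ![t] c := by
  induction c using MvPolynomial.induction_on with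
  | C a => simp
  | add p q hp hq => simp [hp, hq]
  | mul_X p i hp => fin_cases i <;> simp [hp]

private lemma natDegree_aeval_le' {n : ℕ} (v : Fin n → Polynomial ℝ)
    (hv : ∀ i, (v i).natDegree ≤ 1)
    (c : MvPolynomial (Fin n) ℝ) : (MvPolynomial.aeval v c).natDegree ≤ c.totalDegree := by
  conv_lhs => rw [c.as_sum]
  rw [map_sum]
  refine Polynomial.natDegree_sum_le_of_forall_le _ _ ?_
  intro d hd
  rw [MvPolynomial.aeval_monomial]
  refine le_trans (Polynomial.natDegree_mul_le) ?_
  have h1 : (Finsupp.prod d fun i k => v i ^ k).natDegree ≤ d.sum fun _ e => e := by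
    rw [Finsupp.prod]
    refine le_trans (Polynomial.natDegree_prod_le _ _) ?_
    rw [Finsupp.sum]
    refine Finset.sum_le_sum ?_
    intro i _
    calc (v i ^ d i).natDegree ≤ d i * (v i).natDegree := Polynomial.natDegree_pow_le
      _ ≤ d i * 1 := Nat.mul_le_mul_left _ (hv i)
      _ = d i := Nat.mul_one _
  simpa using le_trans h1 (MvPolynomial.le_totalDegree hd)

private lemma coeff_comp_linear' {m : ℕ} (Q : Polynomial ℝ) (hQ : Q.natDegree = m) (hm : 1 ≤ m)
    (r : ℝ) :
    (Q.comp (Polynomial.X + Polynomial.C r)).coeff (m - 1)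
      = Q.coeff (m - 1) + m * Q.coeff m * r := by
  rw [← Polynomial.taylor_apply, Polynomial.taylor_coeff]
  set H := Polynomial.hasseDeriv (m - 1) Q with hH
  have hdH : H.natDegree ≤ 1 := by
    have h := Polynomial.natDegree_hasseDeriv_le Q (m - 1)
    rw [← hH, hQ] at h
    omega
  have hrep : H = Polynomial.C (H.coeff 1) * Polynomial.X + Polynomial.C (H.coeff 0) :=
    Polynomial.eq_X_add_C_of_natDegree_le_one hdH
  have h0 : H.coeff 0 = Q.coeff (m - 1) := by
    rw [hH, Polynomial.hasseDeriv_coeff]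
    simp
  have h1 : H.coeff 1 = m * Q.coeff m := by
    rw [hH, Polynomial.hasseDeriv_coeff]
    have e1 : 1 + (m - 1) = m := by omega
    rw [e1]
    have e2 : m.choose (m - 1) = m := by
      have h3 : m - (m - 1) = 1 := by omega
      rw [← Nat.choose_symm (Nat.sub_le m 1), h3, Nat.choose_one_right]
    rw [e2]
  rw [hrep]
  simp [h0, h1]
  ring

private lemma eval_fse' (f : MvPolynomial (Fin 2) ℝ) (x t : ℝ) :
    MvPolynomial.eval ![x, t] f =
      Polynomial.eval x (Polynomial.map (MvPolynomial.eval ![t])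
        (MvPolynomial.finSuccEquiv ℝ 1 f)) := by
  have h := MvPolynomial.eval_eq_eval_mv_eval' (![t] : Fin 1 → ℝ) x f
  have h2 : (Fin.cons x ![t] : Fin 2 → ℝ) = ![x, t] := by
    funext i; fin_cases i <;> rfl
  rw [h2] at h
  exact h

private lemma P1_rep' (p : Polynomial ℝ) :
    (Polynomial.aeval (MvPolynomial.X 1 : MvPolynomial (Fin 2) ℝ) p)
      = ∑ i ∈ Finset.range (p.natDegree + 1),
          MvPolynomial.monomial (Finsupp.single (1 : Fin 2) i) (p.coeff i) := by
  rw [Polynomial.aeval_eq_sum_range]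
  refine Finset.sum_congr rfl fun i _ => ?_
  rw [MvPolynomial.smul_eq_C_mul, MvPolynomial.X_pow_eq_monomial, MvPolynomial.C_mul_monomial,
    mul_one]

private lemma eval_P1' (p : Polynomial ℝ) (v : Fin 2 → ℝ) :
    MvPolynomial.eval v (Polynomial.aeval (MvPolynomial.X 1 : MvPolynomial (Fin 2) ℝ) p)
      = p.eval (v 1) := by
  rw [P1_rep', map_sum, Polynomial.eval_eq_sum_range]
  refine Finset.sum_congr rfl fun i _ => ?_
  simp [MvPolynomial.eval_monomial]

private lemma totalDegree_P1_le' (p : Polynomial ℝ) :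
    (Polynomial.aeval (MvPolynomial.X 1 : MvPolynomial (Fin 2) ℝ) p).totalDegree
      ≤ p.natDegree := by
  rw [P1_rep']
  refine le_trans (MvPolynomial.totalDegree_finset_sum _ _) ?_
  refine Finset.sup_le fun i hi => ?_
  refine le_trans (MvPolynomial.totalDegree_monomial_le _ _) ?_
  rw [Finsupp.sum_single_index (by rfl)]
  exact Nat.lt_succ_iff.mp (Finset.mem_range.mp hi)

private lemma coeff_P1'' (p : Polynomial ℝ) (d : Fin 2 →₀ ℕ) :
    MvPolynomial.coeff d (Polynomial.aeval (MvPolynomial.X 1 : MvPolynomial (Fin 2) ℝ) p)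
      = if Finsupp.single (1 : Fin 2) (d 1) = d then p.coeff (d 1) else 0 := by
  classical
  have key : ∀ i : ℕ, Finsupp.single (1 : Fin 2) i = d → i = d 1 := by
    intro i h
    have := DFunLike.congr_fun h (1 : Fin 2)
    simpa [Finsupp.single_apply] using this
  rw [P1_rep', MvPolynomial.coeff_sum]
  simp only [MvPolynomial.coeff_monomial]
  by_cases hd : Finsupp.single (1 : Fin 2) (d 1) = d
  · rw [if_pos hd]
    by_cases hr : d 1 ∈ Finset.range (p.natDegree + 1)
    · rw [Finset.sum_eq_single (d 1)]
      · rw [if_pos hd]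
      · intro i _ hne
        exact if_neg fun hcon => hne (key i hcon)
      · intro h; exact absurd hr h
    · rw [Finset.sum_eq_zero, Polynomial.coeff_eq_zero_of_natDegree_lt]
      · simp only [Finset.mem_range, not_lt] at hr; omega
      · intro i hi
        refine if_neg fun hcon => ?_
        rw [key i hcon] at hi
        exact hr hi
  · rw [if_neg hd, Finset.sum_eq_zero]
    intro i hi
    refine if_neg fun hcon => hd ?_
    have h2 := hcon
    rw [key i hcon] at h2
    exact h2

private lemma degreeOf0_P1' (p : Polynomial ℝ) :
    MvPolynomial.degreeOf 0 (Polynomial.aeval (MvPolynomial.X 1 : MvPolynomial (Fin 2) ℝ) p)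
      = 0 := by
  rw [MvPolynomial.degreeOf_eq_sup]
  refine Nat.le_zero.mp (Finset.sup_le fun d hd => ?_)
  rw [MvPolynomial.mem_support_iff, coeff_P1'' p d] at hd
  by_cases h : Finsupp.single (1 : Fin 2) (d 1) = d
  · rw [← h]; simp [Finsupp.single_apply]
  · rw [if_neg h] at hd; exact absurd rfl hd

/-- Explicit form of Theorem 3.1: under the same hypotheses, `f(x,y) = Q(x + p(y))`
for some one-variable real polynomial `p`, and `deg Q ≥ 2`. -/
theorem explicit_composite_of_many_shifted_fibers (k m : ℕ) (hk : 2 ≤ k)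
    (f : MvPolynomial (Fin 2) ℝ) (hdeg : f.totalDegree = k)
    (hxy : f.degreeOf 1 ≤ f.degreeOf 0)
    (a b : Fin (k ^ 2 + 1) → ℝ)
    (ha : Function.Injective a) (hb : Function.Injective b)
    (Q : Polynomial ℝ) (hQ : Q.natDegree = m) (hm : 1 ≤ m)
    (hfib : ∀ i : Fin (k ^ 2 + 1), ∀ x : ℝ,
      MvPolynomial.eval ![x, a i] f = Q.eval (x + b i)) :
    (∃ p : Polynomial ℝ, ∀ x y : ℝ,
      MvPolynomial.eval ![x, y] f = Q.eval (x + p.eval y)) ∧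
    2 ≤ Q.natDegree := by
  classical
  have hQne : Q ≠ 0 := fun h => by rw [h, Polynomial.natDegree_zero] at hQ; omega
  have hqm : Q.coeff m ≠ 0 := by
    have h := Polynomial.leadingCoeff_ne_zero.mpr hQne
    rwa [Polynomial.leadingCoeff, hQ] at h
  have hmne : (m : ℝ) ≠ 0 := Nat.cast_ne_zero.mpr (by omega)
  set F := MvPolynomial.finSuccEquiv ℝ 1 f with hF
  set G : ℝ → Polynomial ℝ := fun t => F.map (MvPolynomial.eval ![t]) with hG
  have hGeval : ∀ t x : ℝ, (G t).eval x = MvPolynomial.eval ![x, t] f :=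
    fun t x => (eval_fse' f x t).symm
  have hGB : ∀ i, G (a i) = Q.comp (Polynomial.X + Polynomial.C (b i)) := by
    intro i
    apply Polynomial.funext
    intro r
    rw [hGeval, hfib i r, Polynomial.eval_comp]
    simp
  -- m ≤ k
  have i0 : Fin (k ^ 2 + 1) := ⟨0, Nat.succ_pos _⟩
  have hmk : m ≤ k := by
    have h1 : (G (a i0)).natDegree = m := by
      rw [hGB i0, Polynomial.natDegree_comp, Polynomial.natDegree_X_add_C, mul_one, hQ]
    have h2 : (G (a i0)).natDegree ≤ k := by
      calc (G (a i0)).natDegree ≤ F.natDegree := Polynomial.natDegree_map_le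
        _ = f.degreeOf 0 := MvPolynomial.natDegree_finSuccEquiv f
        _ ≤ f.totalDegree := MvPolynomial.degreeOf_le_totalDegree f 0
        _ = k := hdeg
    omega
  -- the coefficient polynomial
  have hceval : ∀ t, MvPolynomial.eval ![t] (F.coeff (m - 1)) = (G t).coeff (m - 1) := by
    intro t
    rw [hG]
    simp [Polynomial.coeff_map]
  have hcb : ∀ i, MvPolynomial.eval ![a i] (F.coeff (m - 1))
      = Q.coeff (m - 1) + m * Q.coeff m * b i := by
    intro i
    rw [hceval, hGB i, coeff_comp_linear' Q hQ hm]
  set c' : Polynomial ℝ := MvPolynomial.aeval ![Polynomial.X] (F.coeff (m - 1)) with hc'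
  have hc'eval : ∀ t, c'.eval t = MvPolynomial.eval ![t] (F.coeff (m - 1)) :=
    fun t => eval_toUni' _ t
  have hdc : (F.coeff (m - 1)).totalDegree ≤ k := by
    by_cases h : F.coeff (m - 1) = 0
    · rw [h]; simp
    · have h2 := MvPolynomial.totalDegree_coeff_finSuccEquiv_add_le f (m - 1) h
      rw [← hF, hdeg] at h2
      omega
  have hdc' : c'.natDegree ≤ k :=
    le_trans (natDegree_aeval_le' _ (fun i => by fin_cases i; simp) _) hdc
  set p : Polynomial ℝ := (c' - Polynomial.C (Q.coeff (m - 1)))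
      * Polynomial.C (1 / (m * Q.coeff m)) with hp
  have hpb : ∀ i, p.eval (a i) = b i := by
    intro i
    have h1 : c'.eval (a i) = Q.coeff (m - 1) + m * Q.coeff m * b i := by
      rw [hc'eval]; exact hcb i
    rw [hp]
    simp only [Polynomial.eval_mul, Polynomial.eval_sub, Polynomial.eval_C, h1]
    field_simp
    ring
  have hdp : p.natDegree ≤ k := by
    rw [hp]
    refine le_trans (Polynomial.natDegree_mul_le) ?_
    rw [Polynomial.natDegree_C, Nat.add_zero]
    refine le_trans (Polynomial.natDegree_sub_le _ _) ?_
    rw [Polynomial.natDegree_C]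
    exact max_le hdc' (Nat.zero_le _)
  -- the key identity
  have key : ∀ x y : ℝ, MvPolynomial.eval ![x, y] f = Q.eval (x + p.eval y) := by
    intro x y
    set fy := MvPolynomial.aeval ![Polynomial.C x, Polynomial.X] f with hfy
    have hfye : ∀ t, fy.eval t = MvPolynomial.eval ![x, t] f := fun t => eval_aeval_CX' f x t
    set h := fy - Q.comp (Polynomial.C x + p) with hh
    have hdh : h.natDegree ≤ k ^ 2 := by
      refine le_trans (Polynomial.natDegree_sub_le _ _) ?_
      have h1 : fy.natDegree ≤ k := by
        refine le_trans (natDegree_aeval_le' _ (fun i => by fin_cases i <;> simp) f) ?_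
        exact le_of_eq hdeg
      have h2 : (Q.comp (Polynomial.C x + p)).natDegree ≤ m * k := by
        refine le_trans (Polynomial.natDegree_comp_le) ?_
        rw [hQ]
        refine Nat.mul_le_mul_left m ?_
        refine le_trans (Polynomial.natDegree_add_le _ _) ?_
        rw [Polynomial.natDegree_C]
        exact max_le (Nat.zero_le _) hdp
      have h3 : m * k ≤ k ^ 2 := by
        rw [pow_two]
        exact Nat.mul_le_mul_right k hmk
      have h4 : k ≤ k ^ 2 := by nlinarith
      omega
    have hroots : ∀ i, h.eval (a i) = 0 := by
      intro i
      rw [hh]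
      simp only [Polynomial.eval_sub, Polynomial.eval_comp, Polynomial.eval_add,
        Polynomial.eval_C]
      rw [hfye, hfib i, hpb i]
      ring
    have h0 : h = 0 := by
      refine Polynomial.eq_zero_of_natDegree_lt_card_of_eval_eq_zero h ha hroots ?_
      rw [Fintype.card_fin]
      omega
    have hfq : fy = Q.comp (Polynomial.C x + p) := by rwa [sub_eq_zero] at h0
    rw [← hfye y, hfq]
    simp [Polynomial.eval_comp]
  refine ⟨⟨p, key⟩, ?_⟩
  -- 2 ≤ m
  rw [hQ]
  by_contra hcon
  have hm1 : m = 1 := by omega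
  subst hm1
  set P1 := Polynomial.aeval (MvPolynomial.X 1 : MvPolynomial (Fin 2) ℝ) p with hP1d
  have hfg : f = MvPolynomial.C (Q.coeff 1) * MvPolynomial.X 0
      + MvPolynomial.C (Q.coeff 1) * P1 + MvPolynomial.C (Q.coeff 0) := by
    apply MvPolynomial.funext
    intro v
    have hQrep : Q = Polynomial.C (Q.coeff 1) * Polynomial.X + Polynomial.C (Q.coeff 0) :=
      Polynomial.eq_X_add_C_of_natDegree_le_one (le_of_eq hQ)
    have hv : v = ![v 0, v 1] := by funext i; fin_cases i <;> rfl
    conv_lhs => rw [hv]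
    rw [key (v 0) (v 1)]
    conv_lhs => rw [hQrep]
    simp only [map_add, map_mul, MvPolynomial.eval_C, MvPolynomial.eval_X,
      Polynomial.eval_add, Polynomial.eval_mul, Polynomial.eval_C, Polynomial.eval_X,
      hP1d, eval_P1']
    ring
  have hd0 : f.degreeOf 0 ≤ 1 := by
    rw [hfg]
    refine le_trans (MvPolynomial.degreeOf_add_le _ _ _) ?_
    refine max_le (le_trans (MvPolynomial.degreeOf_add_le _ _ _) ?_) ?_
    · refine max_le ?_ ?_
      · refine le_trans (MvPolynomial.degreeOf_mul_le _ _ _) ?_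
        rw [MvPolynomial.degreeOf_C, MvPolynomial.degreeOf_X]
        simp
      · refine le_trans (MvPolynomial.degreeOf_mul_le _ _ _) ?_
        rw [MvPolynomial.degreeOf_C, hP1d, degreeOf0_P1' p]
        omega
    · rw [MvPolynomial.degreeOf_C]
      omega
  by_cases hple : p.natDegree ≤ 1
  · have ht : f.totalDegree ≤ 1 := by
      rw [hfg]
      refine le_trans (MvPolynomial.totalDegree_add _ _) ?_
      refine max_le (le_trans (MvPolynomial.totalDegree_add _ _) ?_) ?_
      · refine max_le ?_ ?_
        · refine le_trans (MvPolynomial.totalDegree_mul _ _) ?_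
          rw [MvPolynomial.totalDegree_C, MvPolynomial.totalDegree_X]
        · refine le_trans (MvPolynomial.totalDegree_mul _ _) ?_
          rw [MvPolynomial.totalDegree_C, Nat.zero_add]
          exact le_trans (totalDegree_P1_le' p) hple
      · rw [MvPolynomial.totalDegree_C]
        omega
    omega
  · push_neg at hple
    have hpne : p ≠ 0 := by
      intro h
      rw [h, Polynomial.natDegree_zero] at hple
      omega
    set N := p.natDegree with hN
    have hNd : (Finsupp.single (1 : Fin 2) N) 1 = N := by simp
    have hcoef : MvPolynomial.coeff (Finsupp.single (1 : Fin 2) N) f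
        = Q.coeff 1 * p.coeff N := by
      rw [hfg, MvPolynomial.coeff_add, MvPolynomial.coeff_add, MvPolynomial.coeff_C_mul,
        MvPolynomial.coeff_C_mul, hP1d, coeff_P1'', hNd, if_pos rfl]
      have e2 : MvPolynomial.coeff (Finsupp.single (1 : Fin 2) N)
          (MvPolynomial.X 0 : MvPolynomial (Fin 2) ℝ) = 0 := by
        rw [MvPolynomial.coeff_X', if_neg]
        intro hcon2
        have h3 := DFunLike.congr_fun hcon2 (0 : Fin 2)
        simp [Finsupp.single_apply] at h3
      have e3 : MvPolynomial.coeff (Finsupp.single (1 : Fin 2) N)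
          (MvPolynomial.C (Q.coeff 0) : MvPolynomial (Fin 2) ℝ) = 0 := by
        rw [MvPolynomial.coeff_C, if_neg]
        intro hcon2
        have h3 := DFunLike.congr_fun hcon2 (1 : Fin 2)
        simp [Finsupp.single_apply] at h3
        omega
      rw [e2, e3]
      ring
    have hne : MvPolynomial.coeff (Finsupp.single (1 : Fin 2) N) f ≠ 0 := by
      rw [hcoef]
      refine mul_ne_zero hqm ?_
      have h := Polynomial.leadingCoeff_ne_zero.mpr hpne
      rwa [Polynomial.leadingCoeff, ← hN] at h
    have hge : N ≤ f.degreeOf 1 := by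
      rw [MvPolynomial.degreeOf_eq_sup]
      have hmem : Finsupp.single (1 : Fin 2) N ∈ f.support := MvPolynomial.mem_support_iff.mpr hne
      have h := Finset.le_sup (f := fun d : Fin 2 →₀ ℕ => d 1) hmem
      simpa [Finsupp.single_apply] using h
    omega
end

section
/- There exists a constant c > 0 such that for every finite set A ⊆ ℝ one has |A+A| · |A·A| ≥ c·|A|^{5/2}, where A+A = {a+b : a,b ∈ A} and A·A = {a·b : a,b ∈ A}. -/
open Finset Pointwise
set_option maxHeartbeats 1000000

namespace SumProd

variable (A : Finset ℝ)

noncomputable def lineset (l : ℝ) : Finset (ℝ × ℝ) := (A ×ˢ A).filter (fun p => p.2 = l * p.1)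
noncomputable def m (l : ℝ) : ℕ := (lineset A l).card
noncomputable def Nbig (τ : ℕ) : ℕ := ((A / A).filter (fun l => τ ≤ m A l)).card
noncomputable def mulfib (p : ℝ) : Finset (ℝ × ℝ) := (A ×ˢ A).filter (fun q => q.1 * q.2 = p)
noncomputable def Qset : Finset ((ℝ×ℝ)×(ℝ×ℝ)) :=
  ((A ×ˢ A) ×ˢ (A ×ˢ A)).filter (fun q => q.1.1 * q.1.2 = q.2.1 * q.2.2)

variable {A}
theorem m_le (l : ℝ) : m A l ≤ A.card := by
  classical
  have : (lineset A l).card ≤ (A.image (fun a => (a, l * a))).card := by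
    apply card_le_card
    intro p hp
    simp only [lineset, mem_filter, mem_product] at hp
    simp only [mem_image]
    exact ⟨p.1, hp.1.1, by rw [← hp.2]⟩
  calc m A l ≤ _ := this
    _ ≤ A.card := card_image_le

theorem sum_m (hA : ∀ a ∈ A, (0:ℝ) < a) :
    A.card ^ 2 = ∑ l ∈ A / A, m A l := by
  classical
  have h := card_eq_sum_card_fiberwise (f := fun p : ℝ × ℝ => p.2 / p.1)
    (s := A ×ˢ A) (t := A / A) (by
      intro p hp
      rw [mem_coe, mem_product] at hp
      exact div_mem_div hp.2 hp.1)
  rw [card_product, ← sq] at h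
  rw [h]
  apply sum_congr rfl
  intro l _
  unfold m lineset
  apply congrArg
  apply filter_congr
  intro p hp
  rw [mem_product] at hp
  have h1 : p.1 ≠ 0 := ne_of_gt (hA _ hp.1)
  simp only [div_eq_iff h1, eq_comm, mul_comm]

theorem sum_mulfib : A.card ^ 2 = ∑ p ∈ A * A, (mulfib A p).card := by
  classical
  have h := card_eq_sum_card_fiberwise (f := fun q : ℝ × ℝ => q.1 * q.2)
    (s := A ×ˢ A) (t := A * A) (by
      intro p hp
      rw [mem_coe, mem_product] at hp
      exact mul_mem_mul hp.1 hp.2)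
  rw [card_product, ← sq] at h
  exact h

theorem Qset_card_eq_sum_r2 :
    (Qset A).card = ∑ p ∈ A * A, (mulfib A p).card ^ 2 := by
  classical
  have h := card_eq_sum_card_fiberwise (f := fun q : (ℝ×ℝ)×(ℝ×ℝ) => q.1.1 * q.1.2)
    (s := Qset A) (t := A * A) (by
      intro q hq
      simp only [mem_coe, Qset, mem_filter, mem_product] at hq
      exact mul_mem_mul hq.1.1.1 hq.1.1.2)
  rw [h]
  apply sum_congr rfl
  intro p _
  have : (Qset A).filter (fun q => q.1.1 * q.1.2 = p) = (mulfib A p) ×ˢ (mulfib A p) := by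
    ext q
    simp only [Qset, mulfib, mem_filter, mem_product]
    constructor
    · rintro ⟨⟨⟨h1, h2⟩, h3⟩, h4⟩
      exact ⟨⟨h1, h4⟩, ⟨h2, h3 ▸ h4⟩⟩
    · rintro ⟨⟨h1, h4⟩, ⟨h2, h5⟩⟩
      exact ⟨⟨⟨h1, h2⟩, h4.trans h5.symm⟩, h4⟩
  rw [this, card_product, sq]

theorem Qset_card_eq_sum_m2 (hA : ∀ a ∈ A, (0:ℝ) < a) :
    (Qset A).card = ∑ l ∈ A / A, (m A l) ^ 2 := by
  classical
  have hne : ∀ a ∈ A, (a:ℝ) ≠ 0 := fun a ha => ne_of_gt (hA a ha)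
  have h := card_eq_sum_card_fiberwise (f := fun q : (ℝ×ℝ)×(ℝ×ℝ) => q.1.1 / q.2.1)
    (s := Qset A) (t := A / A) (by
      intro q hq
      simp only [mem_coe, Qset, mem_filter, mem_product] at hq
      exact div_mem_div hq.1.1.1 hq.1.2.1)
  rw [h]
  apply sum_congr rfl
  intro l hl
  have key : ((Qset A).filter (fun q => q.1.1 / q.2.1 = l)).card
      = ((lineset A l) ×ˢ (lineset A l)).card := by
    apply card_nbij' (i := fun q => ((q.2.1, q.1.1), (q.1.2, q.2.2)))
      (j := fun r => ((r.1.2, r.2.1), (r.1.1, r.2.2)))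
    · rintro ⟨⟨a, b⟩, ⟨c, d⟩⟩ hq
      simp only [mem_coe, Qset, mem_filter, mem_product, lineset] at hq ⊢
      obtain ⟨⟨⟨⟨ha, hb⟩, hc, hd⟩, habcd⟩, hdiv⟩ := hq
      have hc0 : c ≠ 0 := hne c hc
      have hb0 : b ≠ 0 := hne b hb
      have hac : a = l * c := by rw [div_eq_iff hc0] at hdiv; exact hdiv
      refine ⟨⟨⟨hc, ha⟩, hac⟩, ⟨hb, hd⟩, ?_⟩
      have hcd : c * d = c * (l * b) := by rw [← habcd, hac]; ring
      exact mul_left_cancel₀ hc0 hcd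
    · rintro ⟨⟨x, y⟩, ⟨z, w⟩⟩ hr
      simp only [mem_coe, Qset, mem_filter, mem_product, lineset] at hr ⊢
      obtain ⟨⟨⟨hx, hy⟩, hyx⟩, ⟨hz, hw⟩, hwz⟩ := hr
      have hx0 : x ≠ 0 := hne x hx
      refine ⟨⟨⟨⟨hy, hz⟩, hx, hw⟩, ?_⟩, ?_⟩
      · rw [hyx, hwz]; ring
      · rw [hyx]; field_simp
    · rintro ⟨⟨a, b⟩, ⟨c, d⟩⟩ _; rfl
    · rintro ⟨⟨x, y⟩, ⟨z, w⟩⟩ _; rfl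
  rw [key, card_product, sq, m]

theorem n4_le (hA : ∀ a ∈ A, (0:ℝ) < a) :
    A.card ^ 4 ≤ (A * A).card * ∑ l ∈ A / A, (m A l) ^ 2 := by
  classical
  have cs : ((∑ p ∈ A * A, ((mulfib A p).card : ℝ)) ^ 2)
      ≤ ((A*A).card : ℝ) * ∑ p ∈ A * A, ((mulfib A p).card : ℝ) ^ 2 :=
    sq_sum_le_card_mul_sum_sq
  have : (A.card : ℝ) ^ 4 ≤ ((A*A).card : ℝ) * ∑ p ∈ A * A, ((mulfib A p).card : ℝ) ^ 2 := by
    calc (A.card : ℝ) ^ 4 = ((A.card ^ 2 : ℕ) : ℝ) ^ 2 := by push_cast; ring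
      _ = (∑ p ∈ A * A, ((mulfib A p).card : ℝ)) ^ 2 := by
          rw [sum_mulfib (A := A)]; push_cast; ring
      _ ≤ _ := cs
  have h2 : (A.card : ℝ) ^ 4 ≤ (((A*A).card * ∑ l ∈ A / A, (m A l) ^ 2 : ℕ) : ℝ) := by
    rw [← Qset_card_eq_sum_m2 hA, Qset_card_eq_sum_r2]
    push_cast
    exact this
  exact_mod_cast h2

theorem solymosi (hA : ∀ a ∈ A, (0:ℝ) < a) (τ : ℕ) :
    Nbig A τ * τ ^ 2 ≤ ((A + A).card) ^ 2 + τ ^ 2 := by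
  classical
  set Λ := (A / A).filter (fun l => τ ≤ m A l) with hΛ
  set L := Λ.sort (· ≤ ·) with hL
  set N := Nbig A τ with hN
  have hlen : L.length = N := (Λ.length_sort _)
  set f : ℕ → ℝ := fun i => L.getD i 0 with hf
  have hmem : ∀ i, i < N → f i ∈ Λ := by
    intro i hi
    rw [← hlen] at hi
    rw [hf]
    simp only [L.getD_eq_getElem (0:ℝ) hi]
    rw [← Finset.mem_sort (α := ℝ) (· ≤ ·)]
    exact List.getElem_mem _
  have hmono : ∀ i j, i < j → j < N → f i < f j := by
    intro i j hij hj
    rw [← hlen] at hj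
    have hi : i < L.length := lt_trans hij hj
    have hs : List.Pairwise (· < ·) L := List.sortedLT_iff_pairwise.mp (Finset.sortedLT_sort Λ)
    have h2 := List.Pairwise.rel_get_of_lt hs (a := ⟨i, hi⟩) (b := ⟨j, hj⟩) (by exact hij)
    have e1 : f i = L[i] := L.getD_eq_getElem (0:ℝ) hi
    have e2 : f j = L[j] := L.getD_eq_getElem (0:ℝ) hj
    rw [e1, e2]
    simpa [List.get_eq_getElem] using h2
  -- the sector sum sets
  set G : ℕ → Finset (ℝ × ℝ) :=
    fun i => ((lineset A (f i)) ×ˢ (lineset A (f (i+1)))).image (fun pq => pq.1 + pq.2) with hG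
  have hGcard : ∀ i, i + 1 < N → (G i).card = m A (f i) * m A (f (i+1)) := by
    intro i hi
    have hne : f i ≠ f (i+1) := ne_of_lt (hmono i (i+1) (Nat.lt_succ_self i) hi)
    rw [hG]
    have hinj : Set.InjOn (fun pq : (ℝ×ℝ)×(ℝ×ℝ) => pq.1 + pq.2)
        ((((lineset A (f i)) ×ˢ (lineset A (f (i+1)))) : Finset ((ℝ×ℝ)×(ℝ×ℝ))) : Set ((ℝ×ℝ)×(ℝ×ℝ))) := by
      rintro ⟨⟨px, py⟩, ⟨qx, qy⟩⟩ hpq ⟨⟨px', py'⟩, ⟨qx', qy'⟩⟩ hpq' heq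
      simp only [mem_coe, mem_product, lineset, mem_filter] at hpq hpq'
      obtain ⟨⟨-, hp2⟩, -, hq2⟩ := hpq
      obtain ⟨⟨-, hp2'⟩, -, hq2'⟩ := hpq'
      have h1 : px + qx = px' + qx' := congrArg Prod.fst heq
      have h2 : py + qy = py' + qy' := congrArg Prod.snd heq
      rw [hp2, hq2, hp2', hq2'] at h2
      have hx : px = px' := by
        have h4 : f (i+1) * (px + qx) = f (i+1) * (px' + qx') := by rw [h1]
        have h3 : (f i - f (i+1)) * px = (f i - f (i+1)) * px' := by
          ring_nf
          ring_nf at h2 h4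
          linarith
        exact mul_left_cancel₀ (sub_ne_zero.mpr hne) h3
      have hqx : qx = qx' := by linarith
      simp [hx, hqx, hp2, hq2, hp2', hq2', Prod.ext_iff]
    rw [Finset.card_image_of_injOn hinj, card_product]
    rfl
  -- sector membership and slope bounds
  have hGmem : ∀ i, i + 1 < N → ∀ s ∈ G i,
      s.1 ∈ A + A ∧ s.2 ∈ A + A ∧ 0 < s.1 ∧ f i * s.1 < s.2 ∧ s.2 < f (i+1) * s.1 := by
    intro i hi s hs
    have hlt : f i < f (i+1) := hmono i (i+1) (Nat.lt_succ_self i) hi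
    rw [hG] at hs
    simp only [mem_image, mem_product, lineset, mem_filter] at hs
    obtain ⟨⟨⟨px, py⟩, ⟨qx, qy⟩⟩, ⟨⟨⟨hpx, hpy⟩, hp2⟩, ⟨⟨hqx, hqy⟩, hq2⟩⟩, rfl⟩ := hs
    dsimp only at hpx hpy hqx hqy hp2 hq2
    have hpx0 : (0:ℝ) < px := hA _ hpx
    have hqx0 : (0:ℝ) < qx := hA _ hqx
    simp only [Prod.fst_add, Prod.snd_add]
    refine ⟨add_mem_add hpx hqx, add_mem_add hpy hqy, by linarith, ?_, ?_⟩
    · rw [hp2, hq2]; nlinarith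
    · rw [hp2, hq2]; nlinarith
  -- disjointness
  have hdisj : ∀ i ∈ Finset.range (N - 1), ∀ j ∈ Finset.range (N - 1), i ≠ j →
      Disjoint (G i) (G j) := by
    have key : ∀ i j, i < j → i + 1 < N → j + 1 < N → Disjoint (G i) (G j) := by
      intro i j hij hi hj
      rw [Finset.disjoint_left]
      intro s hsi hsj
      obtain ⟨-, -, hs1, -, h2⟩ := hGmem i hi s hsi
      obtain ⟨-, -, -, h3, -⟩ := hGmem j hj s hsj
      have : f (i+1) ≤ f j := by
        rcases Nat.lt_or_ge (i+1) j with h | h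
        · exact le_of_lt (hmono _ _ h (Nat.lt_of_succ_lt hj))
        · have : i + 1 = j := le_antisymm hij h
          rw [this]
      nlinarith
    intro i hi j hj hij
    rw [Finset.mem_range] at hi hj
    have hi' : i + 1 < N := by omega
    have hj' : j + 1 < N := by omega
    rcases Nat.lt_or_ge i j with h | h
    · exact key i j h hi' hj'
    · exact (key j i (by omega) hj' hi').symm
  -- counting
  have hsum : (N - 1) * τ ^ 2 ≤ ((A + A).card) ^ 2 := by
    have h1 : ∀ i ∈ Finset.range (N - 1), τ ^ 2 ≤ (G i).card := by
      intro i hi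
      rw [Finset.mem_range] at hi
      have hi' : i + 1 < N := by omega
      rw [hGcard i hi']
      have hmi := hmem i (by omega)
      have hmi1 := hmem (i+1) hi'
      rw [hΛ, mem_filter] at hmi hmi1
      calc τ ^ 2 = τ * τ := sq τ
        _ ≤ m A (f i) * m A (f (i+1)) := Nat.mul_le_mul hmi.2 hmi1.2
    calc (N - 1) * τ ^ 2 = ∑ _i ∈ Finset.range (N - 1), τ ^ 2 := by
          rw [Finset.sum_const, card_range, smul_eq_mul]
      _ ≤ ∑ i ∈ Finset.range (N - 1), (G i).card := Finset.sum_le_sum h1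
      _ = ((Finset.range (N - 1)).biUnion G).card := (Finset.card_biUnion hdisj).symm
      _ ≤ ((A + A) ×ˢ (A + A)).card := by
          apply card_le_card
          intro s hs
          rw [Finset.mem_biUnion] at hs
          obtain ⟨i, hi, hsi⟩ := hs
          rw [Finset.mem_range] at hi
          obtain ⟨h1, h2, -⟩ := hGmem i (by omega) s hsi
          rw [mem_product]; exact ⟨h1, h2⟩
      _ = ((A + A).card) ^ 2 := by rw [card_product, sq]
  rcases Nat.eq_zero_or_pos N with h0 | h1
  · rw [h0]; simp
  · have hNe : N - 1 + 1 = N := Nat.succ_pred_eq_of_pos h1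
    calc N * τ ^ 2 = (N - 1 + 1) * τ ^ 2 := by rw [hNe]
      _ = (N - 1) * τ ^ 2 + τ ^ 2 := by ring
      _ ≤ ((A + A).card) ^ 2 + τ ^ 2 := Nat.add_le_add_right hsum _

theorem tau_Nbig_le (hA : ∀ a ∈ A, (0:ℝ) < a) (τ : ℕ) :
    τ * Nbig A τ ≤ A.card ^ 2 := by
  classical
  have h0 : A.card ^ 2 = ∑ l ∈ A / A, m A l := by
    have h := card_eq_sum_card_fiberwise (f := fun p : ℝ × ℝ => p.2 / p.1)
      (s := A ×ˢ A) (t := A / A) (by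
        intro p hp
        rw [mem_coe, mem_product] at hp
        exact div_mem_div hp.2 hp.1)
    rw [card_product, ← sq] at h
    rw [h]
    apply sum_congr rfl
    intro l _
    unfold m lineset
    apply congrArg
    apply filter_congr
    intro p hp
    rw [mem_product] at hp
    have h1 : p.1 ≠ 0 := ne_of_gt (hA _ hp.1)
    simp only [div_eq_iff h1, eq_comm, mul_comm]
  calc τ * Nbig A τ = Nbig A τ * τ := mul_comm _ _
    _ ≤ ∑ l ∈ (A / A).filter (fun l => τ ≤ m A l), m A l := by
        rw [Nbig, ← smul_eq_mul]
        exact Finset.card_nsmul_le_sum _ _ _ (fun l hl => (mem_filter.mp hl).2)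
    _ ≤ ∑ l ∈ A / A, m A l := sum_le_sum_of_subset (filter_subset _ _)
    _ = A.card ^ 2 := h0.symm

theorem gauss_sum (k : ℕ) : ∑ τ ∈ Icc 1 k, (2 * τ - 1) = k ^ 2 := by
  induction k with
  | zero => simp
  | succ k ih =>
    rw [← Finset.insert_Icc_right_eq_Icc_add_one (by omega : 1 ≤ k + 1), Finset.sum_insert (by simp), ih]
    have h : (k+1)^2 = k^2 + 2*k + 1 := by ring
    omega

theorem layer_cake (hA : ∀ a ∈ A, (0:ℝ) < a) :
    ∑ l ∈ A / A, (m A l) ^ 2 = ∑ τ ∈ Icc 1 A.card, (2 * τ - 1) * Nbig A τ := by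
  classical
  have step1 : ∀ l ∈ A / A, (m A l) ^ 2
      = ∑ τ ∈ Icc 1 A.card, (if τ ≤ m A l then 2 * τ - 1 else 0) := by
    intro l _
    rw [← gauss_sum (m A l), ← Finset.sum_filter]
    congr 1
    ext τ
    simp only [mem_filter, mem_Icc]
    have hml := m_le (A := A) l
    omega
  rw [Finset.sum_congr rfl step1, Finset.sum_comm]
  apply sum_congr rfl
  intro τ _
  rw [← Finset.sum_filter, Finset.sum_const, Nbig, smul_eq_mul, mul_comm]

theorem card_le_add (hne : A.Nonempty) : A.card ≤ (A + A).card := by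
  classical
  obtain ⟨a0, ha0⟩ := hne
  apply Finset.card_le_card_of_injOn (fun a => a + a0)
  · intro a ha; exact add_mem_add ha ha0
  · intro a _ b _ h; simpa using h

theorem card_le_mul (hA : ∀ a ∈ A, (0:ℝ) < a) (hne : A.Nonempty) :
    A.card ≤ (A * A).card := by
  classical
  obtain ⟨a0, ha0⟩ := hne
  apply Finset.card_le_card_of_injOn (fun a => a * a0)
  · intro a ha; exact mul_mem_mul ha ha0
  · intro a _ b _ h
    exact mul_right_cancel₀ (ne_of_gt (hA _ ha0)) h

theorem harmonic_le_log : ∀ t n : ℕ, 1 ≤ t → t ≤ n →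
    ∑ τ ∈ Ioc t n, (1:ℝ) / τ ≤ Real.log n - Real.log t := by
  intro t n h1 h2
  induction n, h2 using Nat.le_induction with
  | base => simp
  | succ n hn ih =>
    rw [Finset.sum_Ioc_succ_top (by omega : t ≤ n)]
    have hn0 : (0:ℝ) < n := by
      have : (1:ℕ) ≤ n := le_trans h1 hn
      exact_mod_cast Nat.lt_of_lt_of_le Nat.zero_lt_one this
    have hstep : (1:ℝ) / ((n:ℝ) + 1) ≤ Real.log ((n:ℝ) + 1) - Real.log n := by
      have hx : (0:ℝ) < (n:ℝ) / ((n:ℝ) + 1) := by positivity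
      have hlog := Real.log_le_sub_one_of_pos hx
      rw [Real.log_div (ne_of_gt hn0) (by positivity)] at hlog
      have h2 : (n:ℝ) / ((n:ℝ)+1) - 1 = -(1/((n:ℝ)+1)) := by field_simp; ring
      rw [h2] at hlog
      linarith
    have hih := ih
    push_cast
    push_cast at hih
    linarith


theorem pos_bound (hA : ∀ a ∈ A, (0:ℝ) < a) :
    (A.card : ℝ) ^ 2 * Real.sqrt A.card ≤ 8 * ((A + A).card : ℝ) * ((A * A).card : ℝ) := by
  classical
  rcases A.eq_empty_or_nonempty with rfl | hne
  · simp
  have hn1 : 1 ≤ A.card := hne.card_pos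
  set nn := A.card with hnn
  set n : ℝ := (nn : ℝ) with hn
  set S : ℝ := ((A + A).card : ℝ) with hS
  set M : ℝ := ((A * A).card : ℝ) with hM
  have hn1' : (1:ℝ) ≤ n := by rw [hn]; exact_mod_cast hn1
  have hnpos : (0:ℝ) < n := by linarith
  have hSn : n ≤ S := by rw [hn, hS]; exact_mod_cast card_le_add hne
  have hMn : n ≤ M := by rw [hn, hM]; exact_mod_cast card_le_mul hA hne
  have hSpos : (0:ℝ) < S := by linarith
  have hMpos : (0:ℝ) < M := by linarith
  have hsqpos : (0:ℝ) < Real.sqrt n := Real.sqrt_pos.mpr hnpos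
  have hsq1 : (1:ℝ) ≤ Real.sqrt n := by
    rw [show (1:ℝ) = Real.sqrt 1 by simp]
    exact Real.sqrt_le_sqrt hn1'
  have hss : Real.sqrt n * Real.sqrt n = n := Real.mul_self_sqrt (le_of_lt hnpos)
  rcases le_or_gt (n * Real.sqrt n) S with hcase | hcase
  · -- big sumset case
    have h1 : n ^ 2 * Real.sqrt n = n * (n * Real.sqrt n) := by ring
    have h2 : n * (n * Real.sqrt n) ≤ M * S :=
      mul_le_mul hMn hcase (by positivity) (by linarith)
    have h3 : M * S ≤ 8 * S * M := by nlinarith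
    linarith
  · -- main case
    have hS2n3 : ((A + A).card) ^ 2 < nn ^ 3 := by
      have hr : S ^ 2 < n ^ 3 := by
        have hmm := mul_lt_mul'' hcase hcase (le_of_lt hSpos) (le_of_lt hSpos)
        nlinarith [hmm, hss]
      rw [hS, hn] at hr
      exact_mod_cast hr
    have hnn2pos : 0 < nn ^ 2 := by positivity
    obtain ⟨t, ht1, htn, htub, htlb⟩ :
        ∃ t : ℕ, 1 ≤ t ∧ t ≤ nn ∧ (t:ℝ) ≤ S ^ 2 / n ^ 2 + 1 ∧ S ^ 2 / n ^ 2 < (t:ℝ) := by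
      refine ⟨(A + A).card ^ 2 / nn ^ 2 + 1, Nat.le_add_left 1 _, ?_, ?_, ?_⟩
      · have h5 : (A + A).card ^ 2 / nn ^ 2 < nn := by
          rw [Nat.div_lt_iff_lt_mul hnn2pos]
          calc (A + A).card ^ 2 < nn ^ 3 := hS2n3
            _ = nn * nn ^ 2 := by ring
        omega
      · push_cast
        have h6 := Nat.cast_div_le (α := ℝ) (m := (A + A).card ^ 2) (n := nn ^ 2)
        push_cast at h6
        rw [hS, hn]
        linarith
      · have h2 : (((A+A).card ^ 2 : ℕ) : ℝ) / ((nn ^ 2 : ℕ) : ℝ) < ((A+A).card ^ 2 / nn ^ 2 : ℕ) + 1 := by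
          rw [div_lt_iff₀ (by exact_mod_cast hnn2pos)]
          have h3 : (A+A).card ^ 2 < ((A+A).card ^ 2 / nn ^ 2 + 1) * nn ^ 2 := by
            have h4 := Nat.lt_div_mul_add (a := (A+A).card ^ 2) hnn2pos
            rw [Nat.add_mul, Nat.one_mul]
            exact h4
          exact_mod_cast h3
        push_cast at h2 ⊢
        rw [hS, hn]
        linarith
    have htpos : (0:ℝ) < (t:ℝ) := by exact_mod_cast ht1
    -- part 1 : ℕ bound for small τ
    have hpart1 : ∑ τ ∈ Ioc 0 t, (2 * τ - 1) * Nbig A τ ≤ 2 * nn ^ 2 * t := by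
      calc ∑ τ ∈ Ioc 0 t, (2 * τ - 1) * Nbig A τ
          ≤ ∑ _τ ∈ Ioc 0 t, 2 * nn ^ 2 := by
            apply Finset.sum_le_sum
            intro τ _
            calc (2 * τ - 1) * Nbig A τ ≤ 2 * τ * Nbig A τ :=
                  Nat.mul_le_mul_right _ (by omega)
              _ = 2 * (τ * Nbig A τ) := by ring
              _ ≤ 2 * nn ^ 2 := Nat.mul_le_mul_left 2 (tau_Nbig_le hA τ)
        _ = 2 * nn ^ 2 * t := by
            rw [Finset.sum_const, Nat.card_Ioc, smul_eq_mul, Nat.sub_zero, Nat.mul_comm]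
    -- part 2 : ℝ bound for large τ
    have hpart2 : (∑ τ ∈ Ioc t nn, ((2 * τ - 1) * Nbig A τ : ℕ) : ℝ)
        ≤ 2 * n ^ 2 + 2 * S ^ 2 * (Real.log n - Real.log t) := by
      have hterm : ∀ τ ∈ Ioc t nn, (((2 * τ - 1) * Nbig A τ : ℕ) : ℝ)
          ≤ 2 * (τ:ℝ) + 2 * S ^ 2 * (1 / τ) := by
        intro τ hτ
        rw [Finset.mem_Ioc] at hτ
        have hτ1 : 1 ≤ τ := le_trans ht1 (le_of_lt hτ.1)
        have hτpos : (0:ℝ) < (τ:ℝ) := by exact_mod_cast hτ1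
        have hsoly := solymosi hA τ
        have hsolyR : (Nbig A τ : ℝ) * (τ:ℝ) ^ 2 ≤ S ^ 2 + (τ:ℝ) ^ 2 := by
          rw [hS]; exact_mod_cast hsoly
        have hNb : (Nbig A τ : ℝ) ≤ S ^ 2 / (τ:ℝ) ^ 2 + 1 := by
          rw [← mul_le_mul_iff_of_pos_right (by positivity : (0:ℝ) < (τ:ℝ)^2)]
          calc (Nbig A τ : ℝ) * (τ:ℝ)^2 ≤ S^2 + (τ:ℝ)^2 := hsolyR
            _ = (S^2/(τ:ℝ)^2 + 1) * (τ:ℝ)^2 := by field_simp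
        have hcast : (((2 * τ - 1) * Nbig A τ : ℕ) : ℝ) ≤ 2 * (τ:ℝ) * (Nbig A τ : ℝ) := by
          push_cast
          have : ((2 * τ - 1 : ℕ) : ℝ) ≤ 2 * (τ:ℝ) := by
            have : (1:ℕ) ≤ 2 * τ := by omega
            push_cast [Nat.cast_sub this]
            linarith
          exact mul_le_mul_of_nonneg_right this (by positivity)
        calc (((2 * τ - 1) * Nbig A τ : ℕ) : ℝ) ≤ 2 * (τ:ℝ) * (Nbig A τ : ℝ) := hcast
          _ ≤ 2 * (τ:ℝ) * (S ^ 2 / (τ:ℝ) ^ 2 + 1) := by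
              apply mul_le_mul_of_nonneg_left hNb (by positivity)
          _ = 2 * (τ:ℝ) + 2 * S ^ 2 * (1 / τ) := by field_simp; ring
      calc (∑ τ ∈ Ioc t nn, ((2 * τ - 1) * Nbig A τ : ℕ) : ℝ)
          = ∑ τ ∈ Ioc t nn, (((2 * τ - 1) * Nbig A τ : ℕ) : ℝ) := by push_cast; rfl
        _ ≤ ∑ τ ∈ Ioc t nn, (2 * (τ:ℝ) + 2 * S ^ 2 * (1 / τ)) := Finset.sum_le_sum hterm
        _ = (∑ τ ∈ Ioc t nn, 2 * (τ:ℝ)) + 2 * S ^ 2 * ∑ τ ∈ Ioc t nn, (1 / (τ:ℝ)) := by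
            rw [Finset.sum_add_distrib, Finset.mul_sum]
        _ ≤ 2 * n ^ 2 + 2 * S ^ 2 * (Real.log n - Real.log t) := by
            have h1 : (∑ τ ∈ Ioc t nn, 2 * (τ:ℝ)) ≤ 2 * n ^ 2 := by
              calc (∑ τ ∈ Ioc t nn, 2 * (τ:ℝ)) ≤ ∑ _τ ∈ Ioc t nn, 2 * n := by
                    apply Finset.sum_le_sum
                    intro τ hτ
                    rw [Finset.mem_Ioc] at hτ
                    have : (τ:ℝ) ≤ n := by rw [hn]; exact_mod_cast hτ.2
                    linarith
                _ = (Ioc t nn).card * (2 * n) := by rw [Finset.sum_const, nsmul_eq_mul]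
                _ ≤ n * (2 * n) := by
                    apply mul_le_mul_of_nonneg_right _ (by positivity)
                    rw [Nat.card_Ioc]
                    have : nn - t ≤ nn := Nat.sub_le _ _
                    rw [hn]; exact_mod_cast this
                _ = 2 * n ^ 2 := by ring
            have h2 := harmonic_le_log t nn ht1 htn
            have hlogmono : 0 ≤ Real.log n - Real.log t := by
              have : (t:ℝ) ≤ n := by rw [hn]; exact_mod_cast htn
              have := Real.log_le_log htpos this
              linarith
            nlinarith [sq_nonneg S, h2, mul_le_mul_of_nonneg_left h2 (by positivity : (0:ℝ) ≤ 2 * S ^ 2)]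
    -- combine: energy bound
    have hEsplit : (∑ l ∈ A / A, (m A l) ^ 2)
        = (∑ τ ∈ Ioc 0 t, (2 * τ - 1) * Nbig A τ) + ∑ τ ∈ Ioc t nn, (2 * τ - 1) * Nbig A τ := by
      rw [layer_cake hA, ← hnn]
      rw [show Icc 1 nn = Ioc 0 nn from (Finset.Icc_add_one_left_eq_Ioc 0 nn)]
      rw [← Finset.sum_Ioc_consecutive _ (Nat.zero_le t) htn]
    have hE : (n:ℝ) ^ 4 ≤ M * ((2 * nn ^ 2 * t : ℕ) + (2 * n ^ 2 + 2 * S ^ 2 * (Real.log n - Real.log t))) := by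
      have h0 := n4_le hA
      have h0R : (n:ℝ) ^ 4 ≤ M * ((∑ l ∈ A / A, (m A l) ^ 2 : ℕ) : ℝ) := by
        rw [hn, hM]
        exact_mod_cast h0
      have hsum : ((∑ l ∈ A / A, (m A l) ^ 2 : ℕ) : ℝ)
          ≤ ((2 * nn ^ 2 * t : ℕ) : ℝ) + (2 * n ^ 2 + 2 * S ^ 2 * (Real.log n - Real.log t)) := by
        rw [hEsplit]
        push_cast
        have hp1 : ((∑ τ ∈ Ioc 0 t, (2 * τ - 1) * Nbig A τ : ℕ) : ℝ) ≤ ((2 * nn ^ 2 * t : ℕ) : ℝ) := by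
          exact_mod_cast hpart1
        push_cast at hp1 hpart2
        linarith
      calc (n:ℝ) ^ 4 ≤ M * ((∑ l ∈ A / A, (m A l) ^ 2 : ℕ) : ℝ) := h0R
        _ ≤ M * _ := by apply mul_le_mul_of_nonneg_left hsum (le_of_lt hMpos)
    -- final computation
    set u : ℝ := n * Real.sqrt n / S with hu
    have hu1 : 1 < u := by
      rw [hu, lt_div_iff₀ hSpos]
      linarith
    have hupos : (0:ℝ) < u := by linarith
    have hlogu : Real.log n * 3 - Real.log S * 2 ≤ 2 * (u - 1) := by
      have h1 : Real.log u ≤ u - 1 := Real.log_le_sub_one_of_pos hupos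
      have h2 : Real.log u = Real.log n + Real.log (Real.sqrt n) - Real.log S := by
        rw [hu, Real.log_div (by positivity) (ne_of_gt hSpos), Real.log_mul (ne_of_gt hnpos) (ne_of_gt hsqpos)]
      have h3 : Real.log (Real.sqrt n) = Real.log n / 2 := Real.log_sqrt (le_of_lt hnpos)
      rw [h3] at h2
      linarith
    have hlogt : 2 * Real.log S - 2 * Real.log n ≤ Real.log t := by
      have h1 : (0:ℝ) < S ^ 2 / n ^ 2 := by positivity
      have h2 := Real.log_le_log h1 (le_of_lt htlb)
      rw [Real.log_div (by positivity) (by positivity), Real.log_pow, Real.log_pow] at h2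
      push_cast at h2
      linarith
    -- E ≤ 8 S n sqrt n
    have hfinal : (n:ℝ) ^ 4 ≤ M * (8 * S * n * Real.sqrt n) := by
      have hc1 : ((2 * nn ^ 2 * t : ℕ) : ℝ) = 2 * n ^ 2 * (t:ℝ) := by push_cast; ring
      have hc2 : 2 * n ^ 2 * (t:ℝ) ≤ 2 * S ^ 2 + 2 * n ^ 2 := by
        have := mul_le_mul_of_nonneg_left htub (by positivity : (0:ℝ) ≤ 2 * n ^ 2)
        calc 2 * n ^ 2 * (t:ℝ) ≤ 2 * n ^ 2 * (S ^ 2 / n ^ 2 + 1) := this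
          _ = 2 * S ^ 2 + 2 * n ^ 2 := by field_simp
      have hc3 : Real.log n - Real.log t ≤ 3 * Real.log n - 2 * Real.log S := by linarith
      have hc4 : 2 * S ^ 2 * (Real.log n - Real.log t) ≤ 2 * S ^ 2 * (2 * (u - 1)) := by
        apply mul_le_mul_of_nonneg_left _ (by positivity : (0:ℝ) ≤ 2 * S ^ 2)
        linarith
      have hc5 : 2 * S ^ 2 * (2 * (u - 1)) = 4 * S * (n * Real.sqrt n) - 4 * S ^ 2 := by
        rw [hu]; field_simp; ring
      have hc6 : 4 * n ^ 2 ≤ 4 * S * (n * Real.sqrt n) := by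
        have : n * n ≤ S * (n * Real.sqrt n) := by nlinarith
        nlinarith
      have hSS : n ^ 2 ≤ S ^ 2 := by nlinarith
      calc (n:ℝ) ^ 4 ≤ M * ((2 * nn ^ 2 * t : ℕ) + (2 * n ^ 2 + 2 * S ^ 2 * (Real.log n - Real.log t))) := hE
        _ ≤ M * (8 * S * n * Real.sqrt n) := by
            apply mul_le_mul_of_nonneg_left _ (le_of_lt hMpos)
            rw [hc1]
            nlinarith [hc2, hc4, hc5, hc6, hSS]
    have hgoal : n ^ 2 * Real.sqrt n ≤ 8 * S * M := by
      have hmul : (n ^ 2 * Real.sqrt n) * (n * Real.sqrt n) ≤ (8 * S * M) * (n * Real.sqrt n) := by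
        calc (n ^ 2 * Real.sqrt n) * (n * Real.sqrt n) = n ^ 3 * (Real.sqrt n * Real.sqrt n) := by ring
          _ = n ^ 4 := by rw [hss]; ring
          _ ≤ M * (8 * S * n * Real.sqrt n) := hfinal
          _ = (8 * S * M) * (n * Real.sqrt n) := by ring
      exact le_of_mul_le_mul_right hmul (by positivity)
    exact hgoal


theorem wrap (B : Finset ℝ) (hB : ∀ b ∈ B, (0:ℝ) < b) (n : ℕ) (hn : n ≤ 2 * B.card + 1)
    (hb1 : 1 ≤ B.card) (S M : ℕ) (hS : (B + B).card ≤ S) (hM : (B * B).card ≤ M) :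
    (1/256 : ℝ) * ((n:ℝ) ^ 2 * Real.sqrt n) ≤ (S:ℝ) * M := by
  have hbR : (1:ℝ) ≤ (B.card : ℝ) := by exact_mod_cast hb1
  have hbpos : (0:ℝ) < (B.card : ℝ) := by linarith
  have hnb : (n:ℝ) ≤ 3 * (B.card : ℝ) := by
    have h : n ≤ 3 * B.card := by omega
    exact_mod_cast h
  have hnnonneg : (0:ℝ) ≤ (n:ℝ) := Nat.cast_nonneg n
  have h1 := pos_bound hB
  have hSR : ((B + B).card : ℝ) ≤ (S:ℝ) := by exact_mod_cast hS
  have hMR : ((B * B).card : ℝ) ≤ (M:ℝ) := by exact_mod_cast hM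
  have hSBpos : (0:ℝ) < ((B + B).card : ℝ) := by
    have hne : B.Nonempty := card_pos.mp hb1
    have : (B + B).Nonempty := hne.add hne
    exact_mod_cast this.card_pos
  have hMBpos : (0:ℝ) < ((B * B).card : ℝ) := by
    have hne : B.Nonempty := card_pos.mp hb1
    have : (B * B).Nonempty := hne.mul hne
    exact_mod_cast this.card_pos
  have hsqn : Real.sqrt n ≤ 2 * Real.sqrt B.card := by
    have h2 : (n:ℝ) ≤ 4 * B.card := by linarith
    calc Real.sqrt n ≤ Real.sqrt (4 * B.card) := Real.sqrt_le_sqrt h2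
      _ = 2 * Real.sqrt B.card := by
          rw [show (4:ℝ) * B.card = 2^2 * B.card by ring,
            Real.sqrt_mul (by positivity), Real.sqrt_sq (by norm_num)]
  have hn2 : (n:ℝ) ^ 2 ≤ 9 * (B.card : ℝ) ^ 2 := by nlinarith
  have hkey : (n:ℝ) ^ 2 * Real.sqrt n ≤ 18 * ((B.card : ℝ) ^ 2 * Real.sqrt B.card) := by
    calc (n:ℝ) ^ 2 * Real.sqrt n ≤ (9 * (B.card : ℝ) ^ 2) * (2 * Real.sqrt B.card) := by
          apply mul_le_mul hn2 hsqn (Real.sqrt_nonneg _) (by positivity)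
      _ = 18 * ((B.card : ℝ) ^ 2 * Real.sqrt B.card) := by ring
  have hprod : ((B + B).card : ℝ) * ((B * B).card : ℝ) ≤ (S:ℝ) * M :=
    mul_le_mul hSR hMR (le_of_lt hMBpos) (by positivity)
  nlinarith [hkey, h1, hprod]

end SumProd

open SumProd in
/-- Sum-product estimate: `|A+A|·|A·A| ≥ c·|A|^{5/2}` for every finite `A ⊆ ℝ`. -/
theorem sum_product_five_halves :
    ∃ c : ℝ, 0 < c ∧ ∀ A : Finset ℝ,
      c * (A.card : ℝ) ^ ((5 : ℝ) / 2) ≤ ((A + A).card : ℝ) * ((A * A).card : ℝ) := by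
  classical
  refine ⟨1/256, by norm_num, ?_⟩
  intro A
  rcases Nat.eq_zero_or_pos A.card with h0 | hpos
  · rw [h0]
    push_cast
    rw [Real.zero_rpow (by norm_num)]
    have h1 : (0:ℝ) ≤ ((A + A).card : ℝ) * ((A * A).card : ℝ) := by positivity
    linarith
  · have hne : A.Nonempty := card_pos.mp hpos
    have hxpos : (0:ℝ) < (A.card : ℝ) := by exact_mod_cast hpos
    have hrpow : (A.card : ℝ) ^ ((5:ℝ)/2) = (A.card : ℝ) ^ 2 * Real.sqrt A.card := by
      rw [show (5:ℝ)/2 = 2 + 1/2 by norm_num, Real.rpow_add hxpos, ← Real.sqrt_eq_rpow,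
        show (2:ℝ) = ((2:ℕ):ℝ) by norm_num, Real.rpow_natCast]
    rw [hrpow]
    have hS1 : (1:ℝ) ≤ ((A + A).card : ℝ) := by
      have h : (A + A).Nonempty := hne.add hne
      exact_mod_cast h.card_pos
    have hM1 : (1:ℝ) ≤ ((A * A).card : ℝ) := by
      have h : (A * A).Nonempty := hne.mul hne
      exact_mod_cast h.card_pos
    rcases Nat.lt_or_ge A.card 2 with hsmall | hbig
    · -- |A| = 1
      have h1 : A.card = 1 := by omega
      rw [h1]
      push_cast
      rw [Real.sqrt_one]
      nlinarith
    · -- |A| ≥ 2 : reduce to positive part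
      set P := A.filter (fun a => 0 < a) with hP
      set F := A.filter (fun a => a < 0) with hF
      have hsplit : A.card ≤ P.card + F.card + 1 := by
        have h1 : P.card + (A.filter (fun a => ¬ 0 < a)).card = A.card := by
          rw [hP]
          exact Finset.card_filter_add_card_filter_not (p := fun a => 0 < a)
        have h2 : A.filter (fun a => ¬ 0 < a) ⊆ insert 0 F := by
          intro a ha
          rw [mem_filter] at ha
          rcases lt_or_eq_of_le (not_lt.mp ha.2) with h | h
          · exact mem_insert_of_mem (mem_filter.mpr ⟨ha.1, h⟩)
          · rw [h]; exact mem_insert_self _ _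
        have h3 := card_le_card h2
        have h4 := card_insert_le (0:ℝ) F
        omega
      rcases le_total F.card P.card with hc | hc
      · -- positive part is large
        have hb1 : 1 ≤ P.card := by omega
        have hBpos : ∀ b ∈ P, (0:ℝ) < b := fun b hb => (mem_filter.mp hb).2
        have hSB : (P + P).card ≤ (A + A).card :=
          card_le_card (add_subset_add (filter_subset _ _) (filter_subset _ _))
        have hMB : (P * P).card ≤ (A * A).card :=
          card_le_card (mul_subset_mul (filter_subset _ _) (filter_subset _ _))
        have := wrap P hBpos A.card (by omega) hb1 (A + A).card (A * A).card hSB hMB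
        linarith [this]
      · -- negative part is large; use -F
        have hb1 : 1 ≤ F.card := by omega
        set B := -F with hB
        have hBcard : B.card = F.card := Finset.card_neg F
        have hBpos : ∀ b ∈ B, (0:ℝ) < b := by
          intro b hb
          rw [hB, Finset.mem_neg] at hb
          obtain ⟨a, ha, rfl⟩ := hb
          have : a < 0 := (mem_filter.mp ha).2
          linarith
        have hSB : (B + B).card ≤ (A + A).card := by
          have hsub : B + B ⊆ -(A + A) := by
            intro x hx
            rw [Finset.mem_add] at hx
            obtain ⟨y, hy, z, hz, rfl⟩ := hx
            rw [hB, Finset.mem_neg] at hy hz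
            obtain ⟨a, ha, rfl⟩ := hy
            obtain ⟨b, hb, rfl⟩ := hz
            rw [Finset.mem_neg]
            exact ⟨a + b, add_mem_add (filter_subset _ _ ha) (filter_subset _ _ hb), by ring⟩
          calc (B + B).card ≤ (-(A + A)).card := card_le_card hsub
            _ = (A + A).card := Finset.card_neg _
        have hMB : (B * B).card ≤ (A * A).card := by
          apply card_le_card
          intro x hx
          rw [Finset.mem_mul] at hx
          obtain ⟨y, hy, z, hz, rfl⟩ := hx
          rw [hB, Finset.mem_neg] at hy hz
          obtain ⟨a, ha, rfl⟩ := hy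
          obtain ⟨b, hb, rfl⟩ := hz
          rw [show (-a) * (-b) = a * b by ring]
          exact mul_mem_mul (filter_subset _ _ ha) (filter_subset _ _ hb)
        have := wrap B hBpos A.card (by omega) (by omega) (A + A).card (A * A).card hSB hMB
        linarith [this]
end
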